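/- arXiv:1001.1538 — 4 statements merged into one kernel-verified Lean document; each statement's English description precedes it below -/
import Mathlib

section
/- Let p be a prime and n a positive integer. Any subgroup M of (Z/p²Z)^n of order p^n contains an element z = (b₁, ..., b_n) such that every bᵢ is a multiple of p and at least n/2 of the bᵢ are equal to p (as elements of Z/p²Z). -/
set_option maxHeartbeats 1000000
set_option synthInstance.maxHeartbeats 1000000

open Module

theorem interp (p n : ℕ) [Fact p.Prime] :
    ∀ (d : ℕ) (W : Submodule (ZMod p) (Fin n → ZMod p)), finrank (ZMod p) W = d →
      ∃ S : Finset (Fin n), S.card = d ∧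
        ∀ t : Fin n → ZMod p, ∃ w ∈ W, ∀ i ∈ S, w i = t i := by
  intro d
  induction d with
  | zero =>
    intro W _
    exact ⟨∅, rfl, fun t => ⟨0, W.zero_mem, by simp⟩⟩
  | succ d ih =>
    intro W hW
    have hWne : W ≠ ⊥ := by
      intro h
      rw [h, finrank_bot] at hW
      omega
    obtain ⟨w₀, hw₀W, hw₀⟩ := Submodule.exists_mem_ne_zero_of_ne_bot hWne
    obtain ⟨i₀, hi₀⟩ : ∃ i₀, w₀ i₀ ≠ 0 := by
      by_contra h
      push_neg at h
      exact hw₀ (funext h)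
    set f : (Fin n → ZMod p) →ₗ[ZMod p] ZMod p := LinearMap.proj i₀ with hf
    set g := f.domRestrict W with hg
    have hgsurj : LinearMap.range g = ⊤ := by
      rw [LinearMap.range_eq_top]
      intro t
      refine ⟨(t * (w₀ i₀)⁻¹) • ⟨w₀, hw₀W⟩, ?_⟩
      simp [hg, hf, mul_assoc, inv_mul_cancel₀ hi₀]
    have hrank : finrank (ZMod p) (LinearMap.ker g) = d := by
      have := g.finrank_range_add_finrank_ker
      rw [hgsurj, finrank_top, finrank_self] at this
      omega
    set W' := W ⊓ LinearMap.ker f with hW'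
    have hker : LinearMap.ker g = W'.comap W.subtype := by
      rw [hW', Submodule.comap_inf, Submodule.comap_subtype_self, top_inf_eq]
      rfl
    have hrank' : finrank (ZMod p) W' = d := by
      rw [← hrank, hker]
      exact (Submodule.comapSubtypeEquivOfLe (inf_le_left : W' ≤ W)).symm.finrank_eq
    obtain ⟨S', hS'card, hS'⟩ := ih W' hrank'
    have hi₀S' : i₀ ∉ S' := by
      intro hmem
      obtain ⟨w, hwW', hw⟩ := hS' (fun _ => 1)
      have h0 : w i₀ = 0 := hwW'.2
      have h1 : w i₀ = 1 := hw i₀ hmem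
      exact one_ne_zero (h1 ▸ h0 : (1 : ZMod p) = 0)
    refine ⟨insert i₀ S', by rw [Finset.card_insert_of_notMem hi₀S', hS'card], ?_⟩
    intro t
    obtain ⟨u, huW', hu⟩ := hS' (fun i => t i - t i₀ * (w₀ i₀)⁻¹ * w₀ i)
    refine ⟨u + (t i₀ * (w₀ i₀)⁻¹) • w₀, W.add_mem huW'.1 (W.smul_mem _ hw₀W), ?_⟩
    intro i hi
    rcases Finset.mem_insert.mp hi with rfl | hi
    · have h0 : u i = 0 := huW'.2
      simp [h0, mul_assoc, inv_mul_cancel₀ hi₀]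
    · have := hu i hi
      simp only [Pi.add_apply, Pi.smul_apply, smul_eq_mul, this]
      ring

/-- Any subgroup of `(ℤ/p²ℤ)ⁿ` of order `pⁿ` contains an element all of whose
coordinates are multiples of `p`, with at least `n/2` of them equal to `p`. -/
theorem stmt0 (p n : ℕ) (hp : p.Prime) (hn : 0 < n)
    (M : AddSubgroup (Fin n → ZMod (p ^ 2))) (hM : Nat.card M = p ^ n) :
    ∃ z ∈ M, (∀ i, ∃ c : ZMod (p ^ 2), z i = (p : ZMod (p ^ 2)) * c) ∧
      n ≤ 2 * (Finset.univ.filter fun i => z i = (p : ZMod (p ^ 2))).card := by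
  haveI : Fact p.Prime := ⟨hp⟩
  haveI : Fact (1 < p) := ⟨hp.one_lt⟩
  haveI : NeZero (p ^ 2) := ⟨pow_ne_zero 2 hp.pos.ne'⟩
  have hp2 : (p : ZMod (p ^ 2)) ^ 2 = 0 := by
    rw [← Nat.cast_pow, ZMod.natCast_self]
  have key : ∀ m : ℕ, ((p * (m % p) : ℕ) : ZMod (p ^ 2)) = ((p * m : ℕ) : ZMod (p ^ 2)) := by
    intro m
    conv_rhs => rw [← Nat.div_add_mod m p]
    push_cast
    rw [mul_add, ← mul_assoc, ← sq, hp2, zero_mul, zero_add]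
  -- the lift `ZMod p →+ ZMod p²`, `c ↦ p * c`
  set Φ : ZMod p →+ ZMod (p ^ 2) :=
    AddMonoidHom.mk' (fun c : ZMod p => ((p * c.val : ℕ) : ZMod (p ^ 2)))
      (by
        intro a b
        show ((p * (a + b).val : ℕ) : ZMod (p ^ 2)) = _
        rw [ZMod.val_add, key]
        push_cast
        ring) with hΦ
  have Φapp : ∀ c : ZMod p, Φ c = ((p * c.val : ℕ) : ZMod (p ^ 2)) := fun c => rfl
  have Φinj : Function.Injective Φ := by
    intro a b h
    rw [Φapp, Φapp] at h
    have ha : p * a.val < p ^ 2 := by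
      have h := ZMod.val_lt a; rw [sq]; exact Nat.mul_lt_mul_of_pos_left h hp.pos
    have hb : p * b.val < p ^ 2 := by
      have h := ZMod.val_lt b; rw [sq]; exact Nat.mul_lt_mul_of_pos_left h hp.pos
    have := congrArg ZMod.val h
    rw [ZMod.val_cast_of_lt ha, ZMod.val_cast_of_lt hb] at this
    exact ZMod.val_injective p (Nat.eq_of_mul_eq_mul_left hp.pos this)
  set Φv : (Fin n → ZMod p) → (Fin n → ZMod (p ^ 2)) := fun c i => Φ (c i) with hΦv
  have hΦp : ∀ a : ZMod p, p • Φ a = 0 := by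
    intro a
    rw [nsmul_eq_mul, Φapp]
    push_cast
    rw [← mul_assoc, ← sq, hp2, zero_mul]
  -- the subspace of `F_p^n` corresponding to `M[p]`
  set W : Submodule (ZMod p) (Fin n → ZMod p) :=
    { carrier := {c | Φv c ∈ M}
      zero_mem' := by
        show Φv 0 ∈ M
        have : Φv 0 = 0 := funext fun i => Φ.map_zero
        rw [this]; exact M.zero_mem
      add_mem' := by
        intro a b ha hb
        show Φv (a + b) ∈ M
        have : Φv (a + b) = Φv a + Φv b := funext fun i => Φ.map_add _ _
        rw [this]; exact M.add_mem ha hb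
      smul_mem' := by
        intro s c hc
        show Φv (s • c) ∈ M
        have hs : ∀ x : ZMod p, s • x = s.val • x := fun x => by
          rw [smul_eq_mul, nsmul_eq_mul, ZMod.natCast_zmod_val]
        have : Φv (s • c) = s.val • Φv c := funext fun i => by
          show Φ (s • c i) = s.val • Φ (c i)
          rw [hs, Φ.map_nsmul]
        rw [this]
        exact nsmul_mem hc s.val } with hWdef
  have hWmem : ∀ c : Fin n → ZMod p, c ∈ W ↔ Φv c ∈ M := fun c => Iff.rfl
  -- multiplication by p on M
  set f : ↥M →+ ↥M := AddMonoidHom.mk' (fun x => p • x) (by intro a b; show p • (a + b) = p • a + p • b; rw [smul_add]) with hfdef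
  have hsq : ∀ z : ↥M, (p ^ 2) • z = 0 := by
    intro z
    apply Subtype.ext
    show (p ^ 2) • (z : Fin n → ZMod (p ^ 2)) = 0
    funext i
    show (p ^ 2) • (z : Fin n → ZMod (p ^ 2)) i = 0
    rw [nsmul_eq_mul, ZMod.natCast_self, zero_mul]
  have hrange_le : f.range ≤ f.ker := by
    rintro x ⟨y, rfl⟩
    rw [AddMonoidHom.mem_ker]
    show p • (p • y) = 0
    rw [smul_smul, ← sq]
    exact hsq y
  have hcardM : Nat.card ↥M = Nat.card f.range * Nat.card f.ker := by
    rw [AddSubgroup.card_eq_card_quotient_mul_card_addSubgroup f.ker]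
    congr 1
    exact Nat.card_congr (QuotientAddGroup.quotientKerEquivRange f).toEquiv
  -- bijection between W and ker f
  have hFmem : ∀ c : ↥W, Φv c.1 ∈ M := fun c => c.2
  have hFker : ∀ c : ↥W, (⟨Φv c.1, hFmem c⟩ : ↥M) ∈ f.ker := by
    intro c
    rw [AddMonoidHom.mem_ker]
    apply Subtype.ext
    show p • Φv c.1 = 0
    funext i
    exact hΦp (c.1 i)
  set F : ↥W → ↥f.ker := fun c => ⟨⟨Φv c.1, hFmem c⟩, hFker c⟩ with hF
  have hFbij : Function.Bijective F := by
    constructor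
    · intro a b hab
      apply Subtype.ext
      funext i
      apply Φinj
      have : Φv a.1 = Φv b.1 := congrArg (fun x => (x.1 : Fin n → ZMod (p ^ 2))) hab
      exact congrFun this i
    · rintro ⟨⟨v, hvM⟩, hvker⟩
      rw [AddMonoidHom.mem_ker] at hvker
      have hpv : ∀ i, (p : ZMod (p ^ 2)) * v i = 0 := by
        intro i
        have : p • v = 0 := congrArg Subtype.val hvker
        have := congrFun this i
        rwa [Pi.smul_apply, nsmul_eq_mul] at this
      have hdvd : ∀ i, p ∣ (v i).val := by
        intro i
        have h0 : ((p * (v i).val : ℕ) : ZMod (p ^ 2)) = 0 := by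
          push_cast
          rw [ZMod.natCast_zmod_val]
          exact hpv i
        rw [ZMod.natCast_eq_zero_iff] at h0
        exact (mul_dvd_mul_iff_left (hp.pos.ne' : (p : ℕ) ≠ 0)).mp
          (by rw [← pow_two p]; exact h0)
      set c : Fin n → ZMod p := fun i => (((v i).val / p : ℕ) : ZMod p) with hc
      have hΦc : Φv c = v := by
        funext i
        obtain ⟨w, hw⟩ := hdvd i
        have hwlt : w < p := by
          have hv2 : (v i).val < p ^ 2 := ZMod.val_lt (v i)
          rw [hw, sq] at hv2
          exact lt_of_mul_lt_mul_left hv2 (Nat.zero_le p)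
        have hdiv : (v i).val / p = w := by rw [hw, Nat.mul_div_cancel_left _ hp.pos]
        show Φ (c i) = v i
        rw [Φapp]
        have : (c i).val = w := by
          rw [hc]
          simp only
          rw [hdiv, ZMod.val_cast_of_lt hwlt]
        rw [this, ← hw, ZMod.natCast_zmod_val]
      refine ⟨⟨c, ?_⟩, ?_⟩
      · show Φv c ∈ M
        rw [hΦc]; exact hvM
      · apply Subtype.ext
        apply Subtype.ext
        exact hΦc
  have hcardWK : Nat.card ↥W = Nat.card ↥f.ker := Nat.card_eq_of_bijective F hFbij
  -- card W = p ^ finrank W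
  haveI : Fintype ↥W := Fintype.ofFinite _
  set d : ℕ := finrank (ZMod p) W with hd
  have hcardW : Nat.card ↥W = p ^ d := by
    rw [Nat.card_eq_fintype_card, card_eq_pow_finrank (K := ZMod p) (V := ↥W), ZMod.card]
  -- n ≤ 2 d
  have hnd : n ≤ 2 * d := by
    have hle : Nat.card f.range ≤ Nat.card f.ker := AddSubgroup.card_le_of_le hrange_le
    have h1 : p ^ n ≤ Nat.card f.ker * Nat.card f.ker := by
      rw [← hM, hcardM]
      exact Nat.mul_le_mul_right _ hle
    rw [← hcardWK, hcardW, ← pow_add] at h1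
    have := (Nat.pow_le_pow_iff_right hp.one_lt).mp h1
    omega
  obtain ⟨S, hScard, hS⟩ := interp p n d W rfl
  obtain ⟨w, hwW, hw⟩ := hS (fun _ => 1)
  refine ⟨Φv w, hwW, ?_, ?_⟩
  · intro i
    refine ⟨(((w i).val : ℕ) : ZMod (p ^ 2)), ?_⟩
    show Φ (w i) = _
    rw [Φapp]
    push_cast
    ring
  · have hsub : S ⊆ Finset.univ.filter fun i => Φv w i = (p : ZMod (p ^ 2)) := by
      intro i hi
      rw [Finset.mem_filter]
      refine ⟨Finset.mem_univ i, ?_⟩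
      show Φ (w i) = _
      rw [Φapp, hw i hi, ZMod.val_one, mul_one]
    calc n ≤ 2 * d := hnd
      _ = 2 * S.card := by rw [hScard]
      _ ≤ 2 * (Finset.univ.filter fun i => Φv w i = (p : ZMod (p ^ 2))).card :=
        Nat.mul_le_mul_left 2 (Finset.card_le_card hsub)
end

section
/- Let q ≥ 1 be an odd integer, n a positive integer, and β₁, ..., β_{q-1} nonnegative integers with β₁ + ... + β_{q-1} ≤ n. Then the polynomial f(t) = n + β₁t + β₂t² + ... + β_{q-1}t^{q-1} satisfies f(ω) ≠ 0 for every q-th root of unity ω ∈ ℂ. -/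
/-!
Every `q`-th root of unity `z` with `q` odd has `‖z‖ = 1` and `z ≠ -1`, hence `-1 < Re z`.
Writing `Re f(ω) = (n - Σ βᵢ) + Σ βᵢ (1 + Re ωⁱ)`, both parts are nonnegative, and the sum is
positive: either `Σ βᵢ < n`, or `Σ βᵢ = n > 0` and some `βᵢ (1 + Re ωⁱ)` is positive.
-/

open Finset

lemma Complex.neg_one_lt_re_of_pow_eq_one_of_odd {z : ℂ} {q : ℕ} (hq : Odd q) (hz : z ^ q = 1) :
    -1 < z.re := by
  have hnorm : ‖z‖ = 1 := Complex.norm_eq_one_of_pow_eq_one hz hq.pos.ne'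
  have hle : -1 ≤ z.re := by
    have := Complex.abs_re_le_norm z
    rw [hnorm] at this
    exact (abs_le.mp this).1
  refine hle.lt_of_ne fun hre => ?_
  have him : z.im = 0 := Complex.abs_re_eq_norm.mp (by rw [← hre, hnorm]; norm_num)
  have hz_neg : z = -1 := Complex.ext (by simp [← hre]) (by simp [him])
  rw [hz_neg, hq.neg_one_pow] at hz
  norm_num at hz

lemma add_sum_mul_pos_of_neg_one_lt {ι : Type*} (s : Finset ι) {n : ℝ} {b x : ι → ℝ}
    (hn : 0 < n) (hb : ∀ i ∈ s, 0 ≤ b i) (hx : ∀ i ∈ s, -1 < x i) (hsum : ∑ i ∈ s, b i ≤ n) :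
    0 < n + ∑ i ∈ s, b i * x i := by
  have hsplit : n + ∑ i ∈ s, b i * x i = (n - ∑ i ∈ s, b i) + ∑ i ∈ s, b i * (1 + x i) := by
    simp only [mul_add, mul_one, sum_add_distrib]
    ring
  have hterm : ∀ i ∈ s, 0 ≤ b i * (1 + x i) := fun i hi =>
    mul_nonneg (hb i hi) (by linarith [hx i hi])
  rw [hsplit]
  rcases hsum.lt_or_eq with hlt | heq
  · linarith [sum_nonneg hterm]
  · obtain ⟨i, hi, hbi⟩ : ∃ i ∈ s, 0 < b i := by
      by_contra! hnone
      linarith [sum_nonpos hnone]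
    have hpos := sum_pos' hterm ⟨i, hi, mul_pos hbi (by linarith [hx i hi])⟩
    linarith

theorem stmt3_general (q n : ℕ) (hodd : Odd q) (hn : 0 < n)
    (β : ℕ → ℕ) (hβ : ∑ i ∈ Finset.Icc 1 (q - 1), β i ≤ n)
    (ω : ℂ) (hω : ω ^ q = 1) :
    (n : ℂ) + ∑ i ∈ Finset.Icc 1 (q - 1), (β i : ℂ) * ω ^ i ≠ 0 := by
  have hre_pos : 0 < ((n : ℂ) + ∑ i ∈ Icc 1 (q - 1), (β i : ℂ) * ω ^ i).re := by
    simp only [Complex.add_re, Complex.natCast_re, Complex.re_sum, Complex.mul_re,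
      Complex.natCast_im, zero_mul, sub_zero]
    refine add_sum_mul_pos_of_neg_one_lt _ (by exact_mod_cast hn) (fun i _ => by positivity)
      (fun i _ => Complex.neg_one_lt_re_of_pow_eq_one_of_odd hodd ?_) (by exact_mod_cast hβ)
    rw [← pow_mul, mul_comm, pow_mul, hω, one_pow]
  intro hzero
  rw [hzero, Complex.zero_re] at hre_pos
  exact lt_irrefl 0 hre_pos

/-- If `f(t) = n + β₁ t + ⋯ + β_{q-1} t^{q-1}` with `βᵢ ≥ 0` and `Σ βᵢ ≤ n`,
then `f` does not vanish at any `q`-th root of unity (`q` odd). -/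
theorem stmt3 (q n : ℕ) (hq : 1 ≤ q) (hodd : Odd q) (hn : 0 < n)
    (β : ℕ → ℕ) (hβ : ∑ i ∈ Finset.Icc 1 (q - 1), β i ≤ n)
    (ω : ℂ) (hω : ω ^ q = 1) :
    (n : ℂ) + ∑ i ∈ Finset.Icc 1 (q - 1), (β i : ℂ) * ω ^ i ≠ 0 :=
  stmt3_general q n hodd hn β hβ ω hω
end

section
/- Let q ≥ 1 be an odd integer, n a positive integer, and β₁, ..., β_{q-1} nonnegative integers with β₁ + ... + β_{q-1} ≤ n. Then the polynomial f(t) = n + β₁t + ... + β_{q-1}t^{q-1} is coprime to t^q - 1 in ℚ[t]; equivalently, the ideal generated by the image of f in ℚ[t]/(t^q - 1) is the whole ring. -/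
/-!
Evaluate at a root `ζ` of `t^q - 1` in `ℂ`. Since `q` is odd, no power of `ζ` equals `-1`, so
`Re ζ^i > -1` for every `i`. Hence `Re f(ζ) = (n - Σ βᵢ) + Σ βᵢ (1 + Re ζ^i)` is a sum of
nonnegative terms, and it is positive because either some `βᵢ > 0` or `n - Σ βᵢ = n > 0`.
So `f` and `t^q - 1` have no common complex root.
-/

open Polynomial

theorem Complex.neg_one_lt_re_of_norm_eq_one {z : ℂ} (hz : ‖z‖ = 1) (hz' : z ≠ -1) :
    -1 < z.re := by
  have hle : -1 ≤ z.re := by simpa [hz] using (abs_le.1 (Complex.abs_re_le_norm z)).1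
  refine hle.lt_of_ne fun hre => hz' ?_
  have him : z.im = 0 := Complex.abs_re_eq_norm.1 (by rw [← hre, hz]; norm_num)
  exact Complex.ext (by simp [← hre]) (by simp [him])

theorem pow_ne_neg_one_of_pow_eq_one {M : Type*} [Monoid M] [HasDistribNeg M] {ζ : M} {q : ℕ}
    (hodd : Odd q) (hζ : ζ ^ q = 1) (h1 : (-1 : M) ≠ 1) (i : ℕ) : ζ ^ i ≠ -1 := by
  intro h
  apply h1
  rw [← hodd.neg_one_pow, ← h, ← pow_mul, mul_comm, pow_mul, hζ, one_pow]

theorem add_sum_mul_pos_of_neg_one_lt_s4 {ι K : Type*} [Field K] [LinearOrder K]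
    [IsStrictOrderedRing K] {s : Finset ι} {c : K} {w x : ι → K} (hc : 0 < c)
    (hw : ∀ i ∈ s, 0 ≤ w i) (hwc : ∑ i ∈ s, w i ≤ c) (hx : ∀ i ∈ s, -1 < x i) :
    0 < c + ∑ i ∈ s, w i * x i := by
  by_cases hzero : ∀ i ∈ s, w i = 0
  · rwa [Finset.sum_eq_zero fun i hi => by rw [hzero i hi, zero_mul], add_zero]
  push Not at hzero
  obtain ⟨j, hj, hwj⟩ := hzero
  have hsplit : c + ∑ i ∈ s, w i * x i = (c - ∑ i ∈ s, w i) + ∑ i ∈ s, w i * (1 + x i) := by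
    simp only [mul_add, mul_one, Finset.sum_add_distrib]
    ring
  have hterm : ∀ i ∈ s, 0 ≤ w i * (1 + x i) := fun i hi =>
    mul_nonneg (hw i hi) (by linarith [hx i hi])
  have hpos : 0 < ∑ i ∈ s, w i * (1 + x i) :=
    Finset.sum_pos' hterm ⟨j, hj, mul_pos ((hw j hj).lt_of_ne' hwj) (by linarith [hx j hj])⟩
  rw [hsplit]
  linarith

theorem stmt4_general (q n : ℕ) (hodd : Odd q) (hn : 0 < n)
    (β : ℕ → ℕ) (hβ : ∑ i ∈ Finset.Icc 1 (q - 1), β i ≤ n) :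
    IsCoprime ((C (n : ℚ)) + ∑ i ∈ Finset.Icc 1 (q - 1), C ((β i : ℚ)) * X ^ i)
      ((X : ℚ[X]) ^ q - 1) := by
  refine (isCoprime_iff_aeval_ne_zero_of_isAlgClosed ℚ ℂ _ _).2 fun ζ => ?_
  rcases ne_or_eq (ζ ^ q) 1 with hζ | hζ
  · exact Or.inr (by simpa [sub_eq_zero] using hζ)
  refine Or.inl ?_
  have hnorm : ‖ζ‖ = 1 := Complex.norm_eq_one_of_pow_eq_one hζ hodd.pos.ne'
  have hre : ∀ i, -1 < (ζ ^ i).re := fun i =>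
    Complex.neg_one_lt_re_of_norm_eq_one (by rw [norm_pow, hnorm, one_pow])
      (pow_ne_neg_one_of_pow_eq_one hodd hζ (by norm_num) i)
  have hpos : 0 < (n : ℝ) + ∑ i ∈ Finset.Icc 1 (q - 1), (β i : ℝ) * (ζ ^ i).re :=
    add_sum_mul_pos_of_neg_one_lt_s4 (by exact_mod_cast hn) (fun i _ => Nat.cast_nonneg _)
      (by exact_mod_cast hβ) fun i _ => hre i
  have heval : (aeval ζ ((C (n : ℚ)) + ∑ i ∈ Finset.Icc 1 (q - 1), C ((β i : ℚ)) * X ^ i)).re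
      = n + ∑ i ∈ Finset.Icc 1 (q - 1), (β i : ℝ) * (ζ ^ i).re := by
    simp [Complex.re_sum]
  exact fun h => hpos.ne' (by rw [← heval, h, Complex.zero_re])

/-- If `f(t) = n + β₁ t + ⋯ + β_{q-1} t^{q-1}` with `βᵢ ≥ 0` and `Σ βᵢ ≤ n`,
then `f` is coprime to `t^q - 1` in `ℚ[t]` (`q` odd). -/
theorem stmt4 (q n : ℕ) (hq : 1 ≤ q) (hodd : Odd q) (hn : 0 < n)
    (β : ℕ → ℕ) (hβ : ∑ i ∈ Finset.Icc 1 (q - 1), β i ≤ n) :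
    IsCoprime ((C (n : ℚ)) + ∑ i ∈ Finset.Icc 1 (q - 1), C ((β i : ℚ)) * X ^ i)
      ((X : ℚ[X]) ^ q - 1) :=
  stmt4_general q n hodd hn β hβ
end

section
/- Let p be a prime with p ≡ 3 (mod 4), q = (p-1)/2, and let d̄ : ℤ/pℤ → ℚ be a function with d̄(0) = 0 and d̄(-x) = d̄(x) for all x. Suppose M ⊆ (ℤ/p²ℤ)^n is a subgroup of order p^n such that for every element (p·m₁, ..., p·mₙ) of M lying in the p-torsion subgroup (mᵢ ∈ ℤ/pℤ), one has Σᵢ d̄(mᵢ) = 0. Then d̄ is identically zero. -/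
/-!
The `p`-torsion of `M` is the image of `V = {m | p • m ∈ M} ≤ 𝔽_pⁿ` under `m ↦ p • m`, and
`|M| = |pM| · |M[p]| ≤ |V|²` gives `dim V ≥ n / 2`. Call two coordinates equivalent when they
are nonzero multiples of each other on `V`. A minimal set of coordinates determining `V` has at
least `dim V` elements, lying in distinct classes, so some class `C` of a coordinate `i` not
vanishing on `V` has at most two elements. Summing `Σₖ d̄(vₖ) = 0` over the slice
`{v ∈ V | vᵢ = t}`, the coordinates outside `C` contribute independently of `t` (translate the
slice), whence `Σ_{k ∈ C} d̄(vₖ) = 0` on `V`. So `d̄ = 0`, or `d̄(c x) = -d̄(x)` for some `c ≠ 0`;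
then `c^q = ±1` with `q = (p - 1) / 2` odd, and either sign forces `d̄ = -d̄`.
-/

open Finset

namespace ZMod

def nsmulHom (n : ℕ) : ZMod n →+ ZMod (n ^ 2) :=
  lift n ⟨(AddMonoidHom.mulLeft (n : ZMod (n ^ 2))).comp (Int.castAddHom _),
    by simp [← sq, ← Nat.cast_pow]⟩

theorem nsmulHom_intCast (n : ℕ) (j : ℤ) : nsmulHom n j = n * j := lift_coe _ _ j

theorem nsmulHom_apply (n : ℕ) [NeZero n] (a : ZMod n) : nsmulHom n a = n * a.val := by
  conv_lhs => rw [← natCast_zmod_val a, ← Int.cast_natCast]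
  rw [nsmulHom_intCast, Int.cast_natCast]

theorem exists_nsmulHom_eq (n : ℕ) [NeZero n] {y : ZMod (n ^ 2)} (hy : n • y = 0) :
    ∃ a, nsmulHom n a = y := by
  have hdvd : n ∣ y.val := by
    rw [← natCast_zmod_val y, nsmul_eq_mul, ← Nat.cast_mul, natCast_eq_zero_iff] at hy
    exact Nat.dvd_of_mul_dvd_mul_left (Nat.pos_of_neZero n) (sq n ▸ hy)
  obtain ⟨j, hj⟩ := hdvd
  refine ⟨(j : ℤ), ?_⟩
  rw [nsmulHom_intCast, ← natCast_zmod_val y, hj]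
  push_cast; ring

end ZMod

theorem card_le_card_ker_nsmul_sq {A : Type*} [AddCommGroup A] [Finite A] (n : ℕ)
    (h : ∀ a : A, n • n • a = 0) :
    Nat.card A ≤ Nat.card (nsmulAddMonoidHom n : A →+ A).ker ^ 2 := by
  set μ := (nsmulAddMonoidHom n : A →+ A)
  have hle : μ.range ≤ μ.ker := by
    rintro _ ⟨a, rfl⟩
    exact h a
  calc Nat.card A = Nat.card μ.range * Nat.card μ.ker := by
        rw [AddSubgroup.card_eq_card_quotient_mul_card_addSubgroup μ.ker,
          Nat.card_congr (QuotientAddGroup.quotientKerEquivRange μ).toEquiv]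
    _ ≤ Nat.card μ.ker * Nat.card μ.ker :=
        Nat.mul_le_mul_right _ (AddSubgroup.card_le_of_le hle)
    _ = _ := (sq _).symm

theorem card_ker_nsmul_le_card_comap (n : ℕ) [NeZero n] {ι : Type*} [Finite ι]
    (M : AddSubgroup (ι → ZMod (n ^ 2))) :
    Nat.card (nsmulAddMonoidHom n : M →+ M).ker ≤
      Nat.card (M.comap ((ZMod.nsmulHom n).compLeft ι)) := by
  have hF : ∀ a : ι → ZMod n, n • (ZMod.nsmulHom n).compLeft ι a = 0 := fun a =>
    funext fun i => by
      change n • ZMod.nsmulHom n (a i) = 0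
      rw [← map_nsmul, nsmul_eq_mul, ZMod.natCast_self, zero_mul, map_zero]
  refine Nat.card_le_card_of_surjective (fun a => ⟨⟨_, a.2⟩, Subtype.ext (hF a)⟩) ?_
  rintro ⟨⟨y, hyM⟩, hy⟩
  have hyi : ∀ i, n • y i = 0 := fun i => congrFun (congrArg Subtype.val hy) i
  choose a ha using fun i => ZMod.exists_nsmulHom_eq n (hyi i)
  have hay : (ZMod.nsmulHom n).compLeft ι a = y := funext ha
  exact ⟨⟨a, by simpa [hay] using hyM⟩, by simp [hay]⟩

section CoordinateClasses

variable {K ι : Type*} [Field K] (V : Submodule K (ι → K))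

def CoordProportional (k i : ι) : Prop :=
  ∃ c : K, c ≠ 0 ∧ ∀ v ∈ V, v k = c * v i

namespace CoordProportional

variable {V}

theorem refl (i : ι) : CoordProportional V i i := ⟨1, one_ne_zero, fun _ _ => (one_mul _).symm⟩

theorem symm {k i : ι} : CoordProportional V k i → CoordProportional V i k := by
  rintro ⟨c, hc, h⟩
  exact ⟨c⁻¹, inv_ne_zero hc, fun v hv => by rw [h v hv, inv_mul_cancel_left₀ hc]⟩

theorem trans {k j i : ι} :
    CoordProportional V k j → CoordProportional V j i → CoordProportional V k i := by
  rintro ⟨c, hc, h⟩ ⟨d, hd, h'⟩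
  exact ⟨c * d, mul_ne_zero hc hd, fun v hv => by rw [h v hv, h' v hv, mul_assoc]⟩

end CoordProportional

open Classical in
noncomputable def coordClass [Fintype ι] (i : ι) : Finset ι := {k | CoordProportional V k i}

variable {V} in
theorem mem_coordClass [Fintype ι] {k i : ι} : k ∈ coordClass V i ↔ CoordProportional V k i := by
  simp [coordClass]

def IsDetermining (R : Finset ι) : Prop := ∀ v ∈ V, (∀ r ∈ R, v r = 0) → v = 0

variable {V}

theorem IsDetermining.card_le [Finite K] {R : Finset ι} (hR : IsDetermining V R) :
    Nat.card V ≤ Nat.card K ^ #R := by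
  have hinj : Function.Injective fun (v : V) (r : R) => (v : ι → K) r := by
    intro v w h
    have := hR _ (V.sub_mem v.2 w.2) fun r hr => sub_eq_zero.2 (congrFun h ⟨r, hr⟩)
    exact Subtype.ext (sub_eq_zero.1 this)
  simpa [Nat.card_fun] using Nat.card_le_card_of_injective _ hinj

theorem exists_apply_ne_zero_of_minimal {R : Finset ι} (hR : Minimal (IsDetermining V) R)
    {r : ι} (hr : r ∈ R) : ∃ v ∈ V, (∀ s ∈ R, s ≠ r → v s = 0) ∧ v r ≠ 0 := by
  classical
  by_contra! h
  have herase : IsDetermining V (R.erase r) := fun v hv hvR =>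
    hR.1 v hv fun s hs => by
      by_cases hsr : s = r
      · exact hsr ▸ h v hv fun s' hs' hne => hvR s' (mem_erase.2 ⟨hne, hs'⟩)
      · exact hvR s (mem_erase.2 ⟨hsr, hs⟩)
  exact notMem_erase r R (hR.2 herase (erase_subset r R) hr)

theorem exists_coordClass_card_le_two [Fintype ι] [Nonempty ι] [Finite K]
    (hV : Nat.card K ^ Fintype.card ι ≤ Nat.card V ^ 2) :
    ∃ i, (∃ v ∈ V, v i ≠ 0) ∧ #(coordClass V i) ≤ 2 := by
  classical
  obtain ⟨R, -, hR⟩ := exists_minimal_le_of_wellFoundedLT (IsDetermining V) univ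
    fun v _ h => funext fun r => h r (mem_univ r)
  by_contra! hbig
  have hdisj : (R : Set ι).PairwiseDisjoint (coordClass V) := by
    intro r hr r' hr' hne
    refine Finset.disjoint_left.2 fun k hk hk' => ?_
    obtain ⟨v, hv, hv0, hvr⟩ := exists_apply_ne_zero_of_minimal hR hr
    obtain ⟨c, -, hc⟩ := (mem_coordClass.1 hk).symm.trans (mem_coordClass.1 hk')
    exact hvr (by rw [hc v hv, hv0 r' hr' (Ne.symm hne), mul_zero])
  have h3 : 3 * #R ≤ Fintype.card ι := calc
    3 * #R = ∑ _r ∈ R, 3 := by rw [sum_const, smul_eq_mul, mul_comm]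
    _ ≤ ∑ r ∈ R, #(coordClass V r) := sum_le_sum fun r hr =>
        have ⟨v, hv, _, hvr⟩ := exists_apply_ne_zero_of_minimal hR hr
        hbig r ⟨v, hv, hvr⟩
    _ = #(R.biUnion (coordClass V)) := (card_biUnion hdisj).symm
    _ ≤ Fintype.card ι := card_le_univ _
  have h2 : Fintype.card ι ≤ 2 * #R := by
    have := hV.trans (Nat.pow_le_pow_left hR.1.card_le 2)
    rw [← pow_mul, mul_comm] at this
    exact (Nat.pow_le_pow_iff_right Finite.one_lt_card).1 this
  have := Fintype.card_pos (α := ι)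
  omega

theorem exists_mem_apply_eq_and_apply_eq_zero {i k : ι} (hi : ∃ w ∈ V, w i ≠ 0)
    (hk : ¬ CoordProportional V k i) (t : K) : ∃ v ∈ V, v i = t ∧ v k = 0 := by
  obtain ⟨w, hw, hwi⟩ := hi
  by_cases h : ∀ v ∈ V, v k = w k / w i * v i
  · have hwk : w k = 0 := by
      by_contra hwk
      exact hk ⟨w k / w i, div_ne_zero hwk hwi, h⟩
    exact ⟨(t / w i) • w, V.smul_mem _ hw, by simp [hwi], by simp [hwk]⟩
  push Not at h
  obtain ⟨u, hu, huk⟩ := h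
  set u' := u - (u i / w i) • w with hu'
  have hu'V : u' ∈ V := V.sub_mem hu (V.smul_mem _ hw)
  have hu'i : u' i = 0 := by simp [hu', hwi]
  have hu'k : u' k ≠ 0 := by
    simp only [hu', Pi.sub_apply, Pi.smul_apply, smul_eq_mul, sub_ne_zero]
    contrapose! huk
    rw [huk]; ring
  refine ⟨(t / w i) • w - (t / w i * w k / u' k) • u',
    V.sub_mem (V.smul_mem _ hw) (V.smul_mem _ hu'V), by simp [hwi, hu'i], ?_⟩
  simp [hu'k]

theorem sum_coordClass_eq_zero [Fintype ι] [Finite K] {g : K → ℚ} (hg0 : g 0 = 0)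
    (hV : ∀ v ∈ V, ∑ k, g (v k) = 0) {i : ι} (hi : ∃ w ∈ V, w i ≠ 0) :
    ∀ w ∈ V, ∑ k ∈ coordClass V i, g (w k) = 0 := by
  classical
  have : Fintype V := Fintype.ofFinite V
  intro w hw
  let J : ι → K → ℚ := fun k t => ∑ v : V, if (v : ι → K) i = t then g ((v : ι → K) k) else 0
  have hJ : ∀ t, ∑ k, J k t = 0 := fun t => by
    rw [sum_comm]
    exact sum_eq_zero fun v _ => by rw [← ite_sum_zero, hV v v.2, ite_self]
  have hout : ∀ k ∉ coordClass V i, J k (w i) = J k 0 := by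
    intro k hk
    obtain ⟨v₀, hv₀, hv₀i, hv₀k⟩ :=
      exists_mem_apply_eq_and_apply_eq_zero hi (mt mem_coordClass.2 hk) (w i)
    refine (Fintype.sum_equiv (Equiv.addRight ⟨v₀, hv₀⟩) _ _ fun v => ?_).symm
    simp [hv₀i, hv₀k]
  let N : ℚ := ∑ v : V, if (v : ι → K) i = w i then 1 else 0
  have hin : ∀ k ∈ coordClass V i, J k (w i) - J k 0 = N * g (w k) := by
    intro k hk
    obtain ⟨c, -, hc⟩ := mem_coordClass.1 hk
    simp only [J, N, sum_mul, ← sum_sub_distrib]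
    refine sum_congr rfl fun v _ => ?_
    rw [hc v v.2, hc w hw]
    split_ifs with h1 h0 h0
    · rw [← h1, h0, mul_zero, hg0]; ring
    · rw [h1]; ring
    · rw [h0, mul_zero, hg0]; ring
    · ring
  have hN : N ≠ 0 := by
    simp only [N, sum_boole]
    exact Nat.cast_ne_zero.2 (card_ne_zero.2 ⟨⟨w, hw⟩, by simp⟩)
  refine (mul_eq_zero.1 ?_).resolve_left hN
  calc N * ∑ k ∈ coordClass V i, g (w k) = ∑ k ∈ coordClass V i, (J k (w i) - J k 0) := by
        rw [mul_sum]; exact sum_congr rfl fun k hk => (hin k hk).symm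
    _ = ∑ k, (J k (w i) - J k 0) :=
        sum_subset (subset_univ _) fun k _ hk => by rw [hout k hk, sub_self]
    _ = 0 := by rw [sum_sub_distrib, hJ, hJ, sub_zero]

end CoordinateClasses

theorem eq_zero_of_apply_mul_eq_neg {R : Type*} [CommRing R] [NoZeroDivisors R] {g : R → ℚ}
    (hg : ∀ x, g (-x) = g x) {u : R} (hgu : ∀ x, g (u * x) = -g x) {q : ℕ} (hq : Odd q)
    (huq : u ^ (2 * q) = 1) (x : R) : g x = 0 := by
  have hpow : ∀ j x, g (u ^ j * x) = (-1) ^ j * g x := by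
    intro j
    induction j with
    | zero => simp
    | succ j ih => intro x; rw [pow_succ, mul_assoc, ih, hgu, pow_succ]; ring
  have hsq : u ^ q * u ^ q = 1 := by rw [← pow_add, ← two_mul, huq]
  have h := hpow q x
  rw [hq.neg_one_pow] at h
  rcases mul_self_eq_one_iff.mp hsq with h1 | h1
  · rw [h1, one_mul] at h
    linarith
  · rw [h1, neg_one_mul, hg] at h
    linarith

theorem eq_zero_of_forall_sum_eq_zero {p : ℕ} [Fact p.Prime] (hp : p % 4 = 3) {ι : Type*}
    [Fintype ι] [Nonempty ι] (V : Submodule (ZMod p) (ι → ZMod p))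
    (hV : p ^ Fintype.card ι ≤ Nat.card V ^ 2) {g : ZMod p → ℚ} (hg0 : g 0 = 0)
    (hg : ∀ x, g (-x) = g x) (hsum : ∀ v ∈ V, ∑ k, g (v k) = 0) (x : ZMod p) : g x = 0 := by
  classical
  obtain ⟨i, hi, hcard⟩ := exists_coordClass_card_le_two (V := V) (by rwa [Nat.card_zmod])
  have hloc := sum_coordClass_eq_zero hg0 hsum hi
  obtain ⟨w, hw, hwi⟩ := hi
  have hsurj : ∀ y, ∃ v ∈ V, v i = y := fun y =>
    ⟨(y / w i) • w, V.smul_mem _ hw, by simp [hwi]⟩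
  have hii : i ∈ coordClass V i := mem_coordClass.2 (CoordProportional.refl i)
  have hsplit : ∀ v ∈ V, g (v i) + ∑ k ∈ (coordClass V i).erase i, g (v k) = 0 := fun v hv => by
    rw [add_sum_erase _ (fun k => g (v k)) hii]; exact hloc v hv
  obtain ⟨j, hj⟩ := card_le_one_iff_subset_singleton.1
    (show #((coordClass V i).erase i) ≤ 1 by rw [card_erase_of_mem hii]; omega)
  rcases subset_singleton_iff.1 hj with hC | hC
  · obtain ⟨v, hv, rfl⟩ := hsurj x
    simpa [hC] using hsplit v hv
  · obtain ⟨c, hc0, hc⟩ := mem_coordClass.1 (mem_of_mem_erase (hC ▸ mem_singleton_self j))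
    have hgc : ∀ y, g (c * y) = -g y := fun y => by
      obtain ⟨v, hv, rfl⟩ := hsurj y
      have := hsplit v hv
      rw [hC, sum_singleton, hc v hv] at this
      linarith
    refine eq_zero_of_apply_mul_eq_neg hg hgc (q := p / 2) (Nat.odd_iff.2 (by omega)) ?_ x
    rw [show 2 * (p / 2) = p - 1 by omega]
    exact ZMod.pow_card_sub_one_eq_one hc0

/-- Appendix theorem: if `p ≡ 3 (mod 4)` is prime, `d̄ : ℤ/pℤ → ℚ` is even with
`d̄(0) = 0`, and `M ⊆ (ℤ/p²ℤ)ⁿ` is a subgroup of order `pⁿ` such that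
`Σᵢ d̄(mᵢ) = 0` whenever `(p·m₁, …, p·mₙ) ∈ M`, then `d̄ ≡ 0`. -/
theorem stmt16 (p n : ℕ) (hp : p.Prime) (h3 : p % 4 = 3) (hn : 0 < n)
    (dbar : ZMod p → ℚ) (hd0 : dbar 0 = 0) (hdneg : ∀ x, dbar (-x) = dbar x)
    (M : AddSubgroup (Fin n → ZMod (p ^ 2))) (hM : Nat.card M = p ^ n)
    (hvan : ∀ m : Fin n → ZMod p,
      (fun i => (p : ZMod (p ^ 2)) * ((m i).val : ZMod (p ^ 2))) ∈ M →
        ∑ i, dbar (m i) = 0) :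
    ∀ x, dbar x = 0 := by
  have := Fact.mk hp
  have : Nonempty (Fin n) := ⟨⟨0, hn⟩⟩
  let V := (M.comap ((ZMod.nsmulHom p).compLeft (Fin n))).toZModSubmodule p
  have hMtors : ∀ a : M, p • p • a = 0 := fun a =>
    Subtype.ext <| funext fun i => by simp [smul_smul, ← sq]
  have hcard : p ^ Fintype.card (Fin n) ≤ Nat.card V ^ 2 := by
    rw [Fintype.card_fin, ← hM]
    exact (card_le_card_ker_nsmul_sq p hMtors).trans
      (Nat.pow_le_pow_left (card_ker_nsmul_le_card_comap p M) 2)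
  refine eq_zero_of_forall_sum_eq_zero h3 V hcard hd0 hdneg fun v hv => hvan v ?_
  have hv' : (ZMod.nsmulHom p).compLeft (Fin n) v ∈ M := hv
  rwa [show (ZMod.nsmulHom p).compLeft (Fin n) v = _ from
    funext fun i => ZMod.nsmulHom_apply p (v i)] at hv'
end
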